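/- Let s be a fully normalized binary string of length n ≥ 2. Then the sorting distance of s under prefix block-interchanges satisfies d^s_pbi(s) ≤ ⌈(n−2)/3⌉ + 1; moreover, if grouping s produces the string 01 then d^s_pbi(s) = d^g_pbi(s) ≤ ⌈(n−2)/3⌉. -/

import Mathlib

open List

/-- Normalization of a string: repeatedly merge adjacent equal symbols into one
symbol until no two adjacent symbols are equal. -/
def normalizeStr {α : Type*} [DecidableEq α] (l : List α) : List α :=
  l.destutter (· ≠ ·)

/-- A string is grouped if all occurrences of each symbol are consecutive,
i.e. after merging adjacent equal symbols every symbol occurs at most once. -/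
def Grouped {α : Type*} [DecidableEq α] (l : List α) : Prop :=
  (normalizeStr l).Nodup

/-- The prefix block-interchange β(1,x,y,z) (1-based indices, 1 ≤ x < y ≤ z ≤ n),
before normalization: s[y]…s[z] s[x+1]…s[y−1] s[1]…s[x] s[z+1]…s[n]. -/
def pbiRaw {α : Type*} (l : List α) (x y z : ℕ) : List α :=
  (l.drop (y - 1)).take (z - y + 1) ++ (l.drop x).take (y - 1 - x) ++
    l.take x ++ l.drop z

/-- Prefix block-interchange β(1,x,y,z) followed by normalization. -/
def pbi {α : Type*} [DecidableEq α] (l : List α) (x y z : ℕ) : List α :=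
  normalizeStr (pbiRaw l x y z)

/-- One prefix block-interchange operation transforming `s` into `t`. -/
def PbiStep {α : Type*} [DecidableEq α] (s t : List α) : Prop :=
  ∃ x y z, 1 ≤ x ∧ x < y ∧ y ≤ z ∧ z ≤ s.length ∧ t = pbi s x y z

/-- A restricted prefix block-interchange (2 ≤ x < y ≤ z ≤ n) keeps the first
symbol fixed, before normalization:
s[1] s[y]…s[z] s[x+1]…s[y−1] s[2]…s[x] s[z+1]…s[n]. -/
def rpbiRaw {α : Type*} (l : List α) (x y z : ℕ) : List α :=
  l.take 1 ++ (l.drop (y - 1)).take (z - y + 1) ++ (l.drop x).take (y - 1 - x) ++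
    (l.drop 1).take (x - 1) ++ l.drop z

/-- Restricted prefix block-interchange followed by normalization. -/
def rpbi {α : Type*} [DecidableEq α] (l : List α) (x y z : ℕ) : List α :=
  normalizeStr (rpbiRaw l x y z)

/-- One restricted prefix block-interchange operation transforming `s` into `t`. -/
def RpbiStep {α : Type*} [DecidableEq α] (s t : List α) : Prop :=
  ∃ x y z, 2 ≤ x ∧ x < y ∧ y ≤ z ∧ z ≤ s.length ∧ t = rpbi s x y z

/-- `StepsTo R k s t` : `t` is obtained from `s` by exactly `k` `R`-operations. -/
def StepsTo {α : Type*} (R : List α → List α → Prop) : ℕ → List α → List α → Prop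
  | 0, s, t => s = t
  | k + 1, s, t => ∃ u, R s u ∧ StepsTo R k u t

/-! A fully normalized binary string is the alternating string of its length starting with
its first symbol. On an alternating string `a b a b a b w` (`b = 1 - a`) of length at least 6,
the interchange β(1,2,4,5) produces `b a a a b b w`, whose normalization is the alternating
string `b a b w`: three symbols shorter. Iterating reduces the length to 3, 4 or 5, and one more
interchange leaves `01` or `10`, after at most ⌊n/3⌋ = ⌈(n-2)/3⌉ steps in all; `10` is sorted
by one extra interchange. Since every sorted string is grouped, a grouping to `01` in the
minimal number of steps is also a minimal sorting. -/

theorem StepsTo.snoc {α : Type*} {R : List α → List α → Prop} :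
    ∀ {m : ℕ} {s t u : List α}, StepsTo R m s t → R t u → StepsTo R (m + 1) s u
  | 0, _, _, _, rfl, htu => ⟨_, htu, rfl⟩
  | _ + 1, _, _, _, ⟨v, hsv, hvt⟩, htu => ⟨v, hsv, hvt.snoc htu⟩

section Sorted

variable {α : Type*} [LinearOrder α]

theorem grouped_of_pairwise_le {t : List α} (h : t.Pairwise (· ≤ ·)) : Grouped t := by
  set d := t.destutter (· ≠ ·)
  have hle : IsChain (· ≤ ·) d := (h.sublist (destutter_sublist _ t)).isChain
  have hne : IsChain (· ≠ ·) d := isChain_destutter _ t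
  have hlt : IsChain (· < ·) d := by
    rw [isChain_iff_getElem] at hle hne ⊢
    exact fun i hi => lt_of_le_of_ne (hle i hi) (hne i hi)
  exact (sortedLT_iff_isChain.2 hlt).nodup

theorem isLeast_sorting_of_isLeast_grouping {R : List α → List α → Prop} {s t : List α} {k : ℕ}
    (hk : IsLeast {k | ∃ t, StepsTo R k s t ∧ Grouped t} k)
    (hst : StepsTo R k s t) (ht : t.Pairwise (· ≤ ·)) :
    IsLeast {k | ∃ t, StepsTo R k s t ∧ t.Pairwise (· ≤ ·)} k :=
  ⟨⟨t, hst, ht⟩, fun _ ⟨t', hst', ht'⟩ => hk.2 ⟨t', hst', grouped_of_pairwise_le ht'⟩⟩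

end Sorted

section Alternating

def alternating : ℕ → Fin 2 → List (Fin 2)
  | 0, _ => []
  | n + 1, a => a :: alternating n (1 - a)

theorem alternating_add_two (n : ℕ) (a : Fin 2) :
    alternating (n + 2) a = a :: (1 - a) :: alternating n a := by
  rw [alternating, alternating, sub_sub_cancel]

@[simp]
theorem length_alternating : ∀ (n : ℕ) (a : Fin 2), (alternating n a).length = n
  | 0, _ => rfl
  | n + 1, a => by rw [alternating, length_cons, length_alternating n]

theorem one_sub_ne_self (a : Fin 2) : 1 - a ≠ a := by
  fin_cases a <;> decide

theorem isChain_alternating : ∀ (n : ℕ) (a : Fin 2), (alternating n a).IsChain (· ≠ ·)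
  | 0, _ => isChain_nil
  | n + 1, a => by
    refine (isChain_alternating n (1 - a)).cons fun b hb => ?_
    cases n with
    | zero => simp [alternating] at hb
    | succ n =>
      obtain rfl : 1 - a = b := by simpa [alternating] using hb
      exact (one_sub_ne_self a).symm

theorem eq_alternating_of_isChain :
    ∀ {s : List (Fin 2)}, s.IsChain (· ≠ ·) → ∃ a, s = alternating s.length a
  | [], _ => ⟨0, rfl⟩
  | [a], _ => ⟨a, rfl⟩
  | a :: b :: l, h => by
    obtain ⟨hab, hbl⟩ := isChain_cons_cons.1 h
    obtain ⟨c, hc⟩ := eq_alternating_of_isChain hbl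
    obtain rfl : b = 1 - a := by fin_cases a <;> fin_cases b <;> simp_all
    obtain rfl : c = 1 - a := by simpa [alternating] using (congrArg head? hc).symm
    exact ⟨a, congrArg (a :: ·) hc⟩

theorem destutter'_one_sub_alternating (n : ℕ) (a : Fin 2) :
    destutter' (· ≠ ·) (1 - a) (alternating n a) = alternating (n + 1) (1 - a) := by
  have h := isChain_alternating (n + 1) (1 - a)
  rw [alternating, sub_sub_cancel] at h ⊢
  exact destutter'_of_isChain_cons _ _ h

theorem pbi_alternating_add_six (m : ℕ) (a : Fin 2) :
    pbi (alternating (m + 6) a) 2 4 5 = alternating (m + 3) (1 - a) := by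
  have hne := one_sub_ne_self a
  have hraw : pbiRaw (alternating (m + 6) a) 2 4 5 =
      (1 - a) :: a :: a :: a :: (1 - a) :: (1 - a) :: alternating m a := by
    simp [pbiRaw, alternating, sub_sub_cancel]
  rw [pbi, hraw, normalizeStr, destutter_cons', destutter'_cons_pos _ hne,
    destutter'_cons_neg _ (not_not.2 rfl), destutter'_cons_neg _ (not_not.2 rfl),
    destutter'_cons_pos _ hne.symm,
    destutter'_cons_neg _ (not_not.2 rfl), destutter'_one_sub_alternating]
  simp only [alternating, sub_sub_cancel]

theorem pbiStep_alternating_add_six (m : ℕ) (a : Fin 2) :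
    PbiStep (alternating (m + 6) a) (alternating (m + 3) (1 - a)) :=
  ⟨2, 4, 5, by omega, by omega, by omega, by simp, (pbi_alternating_add_six m a).symm⟩

theorem pbiStep_alternating_of_le_five {n : ℕ} (h3 : 3 ≤ n) (h5 : n ≤ 5) (a : Fin 2) :
    PbiStep (alternating n a) (alternating 2 (1 - a)) := by
  interval_cases n
  · exact ⟨1, 2, 3, le_rfl, by omega, by omega, by simp, by fin_cases a <;> decide⟩
  · exact ⟨1, 4, 4, le_rfl, by omega, le_rfl, by simp, by fin_cases a <;> decide⟩
  · exact ⟨1, 4, 4, le_rfl, by omega, le_rfl, by simp, by fin_cases a <;> decide⟩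

theorem exists_stepsTo_alternating_two (n : ℕ) (hn : 2 ≤ n) (a : Fin 2) :
    ∃ m ≤ n / 3, ∃ b, StepsTo PbiStep m (alternating n a) (alternating 2 b) := by
  induction n using Nat.strong_induction_on generalizing a with
  | _ n ih =>
  rcases lt_or_ge n 6 with h6 | h6
  · obtain rfl | hsmall : n = 2 ∨ 3 ≤ n := by omega
    · exact ⟨0, by norm_num, a, rfl⟩
    · exact ⟨1, by omega, 1 - a, _, pbiStep_alternating_of_le_five hsmall (by omega) a, rfl⟩
  · obtain ⟨m, rfl⟩ := Nat.exists_eq_add_of_le' h6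
    obtain ⟨k, hk, b, hsteps⟩ := ih (m + 3) (by omega) (by omega) (1 - a)
    exact ⟨k + 1, by omega, b, _, pbiStep_alternating_add_six m a, hsteps⟩

theorem grouped_alternating_two (b : Fin 2) : Grouped (alternating 2 b) := by
  unfold Grouped normalizeStr
  fin_cases b <;> decide

end Alternating

theorem pbiStep_one_zero : PbiStep [(1 : Fin 2), 0] [0, 1] :=
  ⟨1, 2, 2, le_rfl, by omega, le_rfl, by simp, by decide⟩

/-- For a fully normalized binary string s of length n ≥ 2, the
sorting distance under prefix block-interchanges is at most ⌈(n−2)/3⌉ + 1;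
moreover, if (an optimal) grouping of s produces the string 01 then the sorting
distance equals the grouping distance, which is at most ⌈(n−2)/3⌉. -/
theorem stmt_4 (s : List (Fin 2)) (hnorm : s.Chain' (· ≠ ·)) (hn : 2 ≤ s.length) :
    (∃ k, k ≤ (s.length - 2 + 2) / 3 + 1 ∧
      ∃ t, StepsTo PbiStep k s t ∧ t.Pairwise (· ≤ ·)) ∧
    (∀ k, IsLeast {k | ∃ t, StepsTo PbiStep k s t ∧ Grouped t} k →
      (∃ t, StepsTo PbiStep k s t ∧ Grouped t ∧ t = [0, 1]) →
      IsLeast {k | ∃ t, StepsTo PbiStep k s t ∧ t.Pairwise (· ≤ ·)} k ∧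
        k ≤ (s.length - 2 + 2) / 3) := by
  obtain ⟨a, ha⟩ := eq_alternating_of_isChain hnorm
  obtain ⟨m, hm, b, hsteps⟩ := exists_stepsTo_alternating_two s.length hn a
  rw [← ha] at hsteps
  have hm' : m ≤ (s.length - 2 + 2) / 3 := by rwa [Nat.sub_add_cancel hn]
  refine ⟨?_, fun k hk ⟨t, hkt, _, ht⟩ =>
    ⟨isLeast_sorting_of_isLeast_grouping hk hkt (by rw [ht]; decide),
      (hk.2 ⟨_, hsteps, grouped_alternating_two b⟩).trans hm'⟩⟩
  fin_cases b
  · exact ⟨m, by omega, _, hsteps, by decide⟩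
  · exact ⟨m + 1, by omega, _, hsteps.snoc pbiStep_one_zero, by decide⟩
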